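/- arXiv:2011.05686 — 2 statements merged into one kernel-verified Lean document; each statement's English description precedes it below -/
import Mathlib

section
/- Let F be a finite set, π a probability measure on F with full support, and for each z ∈ F let p ↦ V_p(z) be convex, differentiable and finite on ℝ^d with V_0(z)=0. Set H_π(p) = Σ_z V_p(z) π(z) and L_π(v) = sup_p (⟨p,v⟩ − H_π(p)). Suppose p* ∈ ℝ^d satisfies ∇H_π(p*) = v. Then L_π(v) = Σ_z π(z) L_z(w*(z)), where w*(z) := ∇_p V_{p*}(z) and L_z(u) = sup_p (⟨p,u⟩ − V_p(z)); in particular Σ_z π(z) w*(z) = v and the infimum of Σ_z π(z) L_z(w(z)) over all w with Σ_z π(z) w(z) = v is attained at w*. -/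
/-!
For fixed `p` and any velocity field `w` with `Σ π(z) w(z) = v`,
`⟨p, v⟩ - H_π(p) = Σ π(z) (⟨p, w(z)⟩ - V_p(z)) ≤ Σ π(z) L_z(w(z))` (weak duality).
By the first-order condition, the Legendre supremum of a convex differentiable function at the
slope `∇f(x)` is attained at `x`. Applied to `H_π` and to every `V_·(z)` at `p*`, this makes both
sides of the weak duality inequality equal to `L_π(v)` when `p = p*` and `w = ∇_p V_{p*}`.
-/

open scoped RealInnerProductSpace

/-- The pointwise Lagrangian `L_z(u) = sup_p (⟨p,u⟩ − V_p(z))`. -/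
noncomputable def pointLagrangian {d : ℕ} {F : Type*}
    (V : EuclideanSpace ℝ (Fin d) → F → ℝ) (z : F)
    (u : EuclideanSpace ℝ (Fin d)) : EReal :=
  ⨆ p : EuclideanSpace ℝ (Fin d), ((⟪p, u⟫ : ℝ) : EReal) - ((V p z : ℝ) : EReal)

theorem EReal.coe_finset_sum {ι : Type*} (s : Finset ι) (f : ι → ℝ) :
    ((∑ i ∈ s, f i : ℝ) : EReal) = ∑ i ∈ s, (f i : EReal) :=
  map_sum (⟨⟨Real.toEReal, EReal.coe_zero⟩, EReal.coe_add⟩ : ℝ →+ EReal) f s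

theorem ConvexOn.sum_mul {𝕜 E ι : Type*} [Field 𝕜] [LinearOrder 𝕜] [IsStrictOrderedRing 𝕜]
    [AddCommGroup E] [Module 𝕜 E] {s : Set E} (hs : Convex 𝕜 s) (t : Finset ι) {c : ι → 𝕜}
    {f : ι → E → 𝕜} (hc : ∀ i ∈ t, 0 ≤ c i) (hf : ∀ i ∈ t, ConvexOn 𝕜 s (f i)) :
    ConvexOn 𝕜 s fun x => ∑ i ∈ t, c i * f i x := by
  classical
  induction t using Finset.induction_on with
  | empty => simpa using convexOn_const (0 : 𝕜) hs
  | insert i t hi ih =>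
    simp only [Finset.sum_insert hi]
    simp only [Finset.forall_mem_insert] at hc hf
    exact (hf.1.smul hc.1).add (ih hc.2 hf.2)

theorem ConvexOn.apply_sub_le_sub_of_hasFDerivAt {E : Type*} [NormedAddCommGroup E]
    [NormedSpace ℝ E] {f : E → ℝ} {f' : E →L[ℝ] ℝ} {s : Set E} {x y : E}
    (hf : ConvexOn ℝ s f) (hx : x ∈ s) (hy : y ∈ s) (hf' : HasFDerivAt f f' x) :
    f' (y - x) ≤ f y - f x := by
  set ℓ : ℝ →ᵃ[ℝ] E := AffineMap.lineMap x y
  have hℓ0 : ℓ 0 = x := AffineMap.lineMap_apply_zero x y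
  have hℓ1 : ℓ 1 = y := AffineMap.lineMap_apply_one x y
  have hline : ConvexOn ℝ (ℓ ⁻¹' s) (f ∘ ℓ) := hf.comp_affineMap ℓ
  have hderiv : HasDerivAt (f ∘ ℓ) (f' (y - x)) 0 :=
    (hℓ0 ▸ hf').comp_hasDerivAt (0 : ℝ) AffineMap.hasDerivAt_lineMap
  have hslope := hline.le_slope_of_hasDerivAt (x := 0) (y := 1) (by simpa [hℓ0] using hx)
    (by simpa [hℓ1] using hy) one_pos hderiv
  simpa [slope_def_field, hℓ0, hℓ1] using hslope

section Legendre

variable {E : Type*} [NormedAddCommGroup E] [InnerProductSpace ℝ E]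

theorem ConvexOn.inner_sub_le_sub_of_hasGradientAt [CompleteSpace E] {f : E → ℝ} {g : E}
    {s : Set E} {x y : E} (hf : ConvexOn ℝ s f) (hx : x ∈ s) (hy : y ∈ s)
    (hg : HasGradientAt f g x) :
    ⟪g, y - x⟫ ≤ f y - f x := by
  simpa using hf.apply_sub_le_sub_of_hasFDerivAt hx hy (hasGradientAt_iff_hasFDerivAt.mp hg)

noncomputable def legendreTransform (f : E → ℝ) (v : E) : EReal :=
  ⨆ p, ((⟪p, v⟫ : ℝ) : EReal) - ((f p : ℝ) : EReal)

theorem pointLagrangian_eq_legendreTransform {d : ℕ} {F : Type*}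
    (V : EuclideanSpace ℝ (Fin d) → F → ℝ) (z : F) :
    pointLagrangian V z = legendreTransform fun p => V p z :=
  rfl

theorem coe_inner_sub_le_legendreTransform (f : E → ℝ) (p v : E) :
    ((⟪p, v⟫ - f p : ℝ) : EReal) ≤ legendreTransform f v :=
  le_iSup_of_le p (EReal.coe_sub _ _).le

theorem legendreTransform_eq_of_hasGradientAt [CompleteSpace E] {f : E → ℝ} {x v : E}
    (hf : ConvexOn ℝ Set.univ f) (hv : HasGradientAt f v x) :
    legendreTransform f v = ((⟪x, v⟫ - f x : ℝ) : EReal) := by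
  refine le_antisymm (iSup_le fun p => ?_) (coe_inner_sub_le_legendreTransform f x v)
  have h := hf.inner_sub_le_sub_of_hasGradientAt (Set.mem_univ x) (Set.mem_univ p) hv
  rw [inner_sub_right, real_inner_comm p v, real_inner_comm x v] at h
  exact_mod_cast (show ⟪p, v⟫ - f p ≤ ⟪x, v⟫ - f x by linarith)

end Legendre

section WeightedSum

variable {E ι : Type*} [NormedAddCommGroup E] [InnerProductSpace ℝ E] [Fintype ι]
  {c : ι → ℝ} {f : ι → E → ℝ} {w : ι → E}

theorem hasGradientAt_sum_mul [CompleteSpace E] {x : E}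
    (hf : ∀ i, HasGradientAt (f i) (w i) x) :
    HasGradientAt (fun p => ∑ i, c i * f i p) (∑ i, c i • w i) x := by
  rw [hasGradientAt_iff_hasFDerivAt, map_sum]
  simp only [map_smul]
  exact HasFDerivAt.fun_sum fun i _ => (hasGradientAt_iff_hasFDerivAt.mp (hf i)).const_mul (c i)

theorem inner_sum_smul_sub_sum_mul (p : E) :
    ⟪p, ∑ i, c i • w i⟫ - ∑ i, c i * f i p = ∑ i, c i * (⟪p, w i⟫ - f i p) := by
  simp only [inner_sum, real_inner_smul_right, mul_sub, Finset.sum_sub_distrib]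

theorem coe_inner_sub_le_sum_mul_legendreTransform (hc : ∀ i, 0 ≤ c i) (p : E) :
    ((⟪p, ∑ i, c i • w i⟫ - ∑ i, c i * f i p : ℝ) : EReal)
      ≤ ∑ i, (c i : EReal) * legendreTransform (f i) (w i) := by
  rw [inner_sum_smul_sub_sum_mul, EReal.coe_finset_sum]
  refine Finset.sum_le_sum fun i _ => ?_
  rw [EReal.coe_mul]
  exact mul_le_mul_of_nonneg_left (coe_inner_sub_le_legendreTransform (f i) p (w i))
    (EReal.coe_nonneg.mpr (hc i))

theorem sum_mul_legendreTransform_eq_of_hasGradientAt [CompleteSpace E] {x : E}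
    (hf : ∀ i, ConvexOn ℝ Set.univ (f i)) (hw : ∀ i, HasGradientAt (f i) (w i) x) :
    ∑ i, (c i : EReal) * legendreTransform (f i) (w i)
      = ((⟪x, ∑ i, c i • w i⟫ - ∑ i, c i * f i x : ℝ) : EReal) := by
  simp only [legendreTransform_eq_of_hasGradientAt (hf _) (hw _), inner_sum_smul_sub_sum_mul,
    EReal.coe_finset_sum, EReal.coe_mul]

end WeightedSum

theorem lagrangian_double_optimization_general {d : ℕ} {F : Type*} [Fintype F]
    (π : F → ℝ) (hπpos : ∀ z, 0 < π z)
    (V : EuclideanSpace ℝ (Fin d) → F → ℝ)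
    (hVconv : ∀ z, ConvexOn ℝ Set.univ (fun p => V p z))
    (hVdiff : ∀ z, Differentiable ℝ (fun p => V p z))
    (pstar v : EuclideanSpace ℝ (Fin d))
    (hgrad : gradient (fun p => ∑ z, π z * V p z) pstar = v) :
    (∑ z, π z • gradient (fun p => V p z) pstar = v) ∧
    ((⨆ p : EuclideanSpace ℝ (Fin d),
        ((⟪p, v⟫ : ℝ) : EReal) - ((∑ z, π z * V p z : ℝ) : EReal))
      = ∑ z, ((π z : ℝ) : EReal) * pointLagrangian V z (gradient (fun p => V p z) pstar)) ∧
    (∀ w : F → EuclideanSpace ℝ (Fin d), (∑ z, π z • w z = v) →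
      (∑ z, ((π z : ℝ) : EReal) * pointLagrangian V z (gradient (fun p => V p z) pstar))
        ≤ ∑ z, ((π z : ℝ) : EReal) * pointLagrangian V z (w z)) := by
  set wstar := fun z => gradient (fun p => V p z) pstar
  have hwstar : ∀ z, HasGradientAt (fun p => V p z) (wstar z) pstar :=
    fun z => (hVdiff z pstar).hasGradientAt
  have hH : HasGradientAt (fun p => ∑ z, π z * V p z) (∑ z, π z • wstar z) pstar :=
    hasGradientAt_sum_mul hwstar
  have hmean : ∑ z, π z • wstar z = v := hH.gradient.symm.trans hgrad
  have hdual : ∑ z, (π z : EReal) * pointLagrangian V z (wstar z)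
      = ((⟪pstar, v⟫ - ∑ z, π z * V pstar z : ℝ) : EReal) := by
    simpa only [pointLagrangian_eq_legendreTransform, hmean]
      using sum_mul_legendreTransform_eq_of_hasGradientAt (c := π) hVconv hwstar
  refine ⟨hmean, ?_, fun w hw => ?_⟩
  · rw [hdual]
    exact legendreTransform_eq_of_hasGradientAt
      (ConvexOn.sum_mul convex_univ Finset.univ (fun z _ => (hπpos z).le) fun z _ => hVconv z)
      (hmean ▸ hH)
  · rw [hdual, ← hw]
    exact coe_inner_sub_le_sum_mul_legendreTransform (f := fun z p => V p z)
      (fun z => (hπpos z).le) pstar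

/-- Finite-state version of the double-optimization representation of the Lagrangian:
if `∇H_π(p*) = v`, then with `w*(z) := ∇_p V_{p*}(z)` one has `Σ_z π(z) w*(z) = v`,
`L_π(v) = Σ_z π(z) L_z(w*(z))`, and `w*` minimizes `Σ_z π(z) L_z(w(z))` among all
velocity fields `w` with mean `v`. -/
theorem lagrangian_double_optimization {d : ℕ} {F : Type*} [Fintype F]
    (π : F → ℝ) (hπpos : ∀ z, 0 < π z) (hπ1 : ∑ z, π z = 1)
    (V : EuclideanSpace ℝ (Fin d) → F → ℝ)
    (hVconv : ∀ z, ConvexOn ℝ Set.univ (fun p => V p z))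
    (hVdiff : ∀ z, Differentiable ℝ (fun p => V p z))
    (hV0 : ∀ z, V 0 z = 0)
    (pstar v : EuclideanSpace ℝ (Fin d))
    (hgrad : gradient (fun p => ∑ z, π z * V p z) pstar = v) :
    (∑ z, π z • gradient (fun p => V p z) pstar = v) ∧
    ((⨆ p : EuclideanSpace ℝ (Fin d),
        ((⟪p, v⟫ : ℝ) : EReal) - ((∑ z, π z * V p z : ℝ) : EReal))
      = ∑ z, ((π z : ℝ) : EReal) * pointLagrangian V z (gradient (fun p => V p z) pstar)) ∧
    (∀ w : F → EuclideanSpace ℝ (Fin d), (∑ z, π z • w z = v) →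
      (∑ z, ((π z : ℝ) : EReal) * pointLagrangian V z (gradient (fun p => V p z) pstar))
        ≤ ∑ z, ((π z : ℝ) : EReal) * pointLagrangian V z (w z)) :=
  lagrangian_double_optimization_general π hπpos V hVconv hVdiff pstar v hgrad
end

section
/- Let H(p) = sup_{π ∈ K} (G(p,π) − I(π)), where K is a compact metric space, G : ℝ^d × K → ℝ is continuous and p ↦ G(p,π) is convex for each π, and I : K → [0,∞] is lower semicontinuous with I not identically +∞. Then the Legendre transform L(v) = sup_p (⟨p,v⟩ − H(p)) satisfies L(v) = inf_{π ∈ K} [ sup_p (⟨p,v⟩ − G(p,π)) + I(π) ], provided additionally that π ↦ G(p,π) is concave for each p and π ↦ I(π) is convex (so that Sion's minimax theorem applies). -/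
/-!
Once `H` is unfolded, the two sides are `⨆ p, ⨅ π` and `⨅ π, ⨆ p` of the single
`EReal`-valued function `(π, p) ↦ ⟪p, v⟫ - G p π + I π`. It is lower semicontinuous and
quasiconvex in `π` on the compact convex set `K`, continuous and concave in `p`, so Sion's
minimax theorem (`Sion.minimax'`) exchanges `⨅ π` and `⨆ p`. The only work is to move the
extended-real arithmetic through the suprema and to see that quasiconvexity in `π` survives
the value `+∞` of `I`.
-/

open scoped ENNReal RealInnerProductSpace

open Set

namespace EReal

theorem continuous_coe_add_const (c : EReal) : Continuous fun t : ℝ => (t : EReal) + c :=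
  continuous_iff_continuousAt.2 fun _ =>
    (continuousAt_add (Or.inl (coe_ne_top _)) (Or.inl (coe_ne_bot _))).comp
      (continuous_coe_real_ereal.prodMk continuous_const).continuousAt

theorem monotone_coe_add_const (c : EReal) : Monotone fun t : ℝ => (t : EReal) + c :=
  fun _ _ h => add_le_add_left (by exact_mod_cast h) c

theorem continuous_coe_sub (a : ℝ) : Continuous fun x : EReal => (a : EReal) - x := by
  simp only [sub_eq_add_neg]
  exact continuous_iff_continuousAt.2 fun _ =>
    (continuousAt_add (Or.inl (coe_ne_top a)) (Or.inl (coe_ne_bot a))).comp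
      (continuous_const.prodMk continuous_neg).continuousAt

theorem coe_sub_iSup {ι : Sort*} (a : ℝ) (g : ι → EReal) :
    (a : EReal) - ⨆ i, g i = ⨅ i, ((a : EReal) - g i) :=
  Antitone.map_iSup_of_continuousAt (continuous_coe_sub a).continuousAt
    (fun _ _ h => sub_le_sub le_rfl h) (coe_sub_bot a)

theorem iSup_add_coe_ennreal {ι : Sort*} (g : ι → EReal) (c : ℝ≥0∞) :
    (⨆ i, g i) + c = ⨆ i, (g i + c) := by
  rcases eq_or_ne (⨆ i, g i) ⊥ with h | h
  · rw [h, bot_add]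
    rw [iSup_eq_bot] at h
    simp [h]
  · have hcont : ContinuousAt (fun x : EReal => x + c) (⨆ i, g i) :=
      (continuousAt_add (Or.inr (coe_ennreal_ne_bot c)) (Or.inl h)).comp
        (continuous_id.prodMk continuous_const).continuousAt
    exact Monotone.map_iSup_of_continuousAt hcont (fun _ _ h => add_le_add_left h _) (bot_add _)

theorem coe_sub_coe_sub (a b : ℝ) (x : EReal) :
    (a : EReal) - ((b : EReal) - x) = ((a - b : ℝ) : EReal) + x := by
  induction x with
  | bot => simp
  | coe x => norm_cast; ring
  | top => rw [sub_top, coe_sub_bot, coe_add_top]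

theorem coe_add_coe_ennreal_le_coe_iff {a r : ℝ} {c : ℝ≥0∞} :
    (a : EReal) + c ≤ r ↔ c ≠ ⊤ ∧ a + c.toReal ≤ r := by
  induction c with
  | top => simp
  | coe c =>
    simp only [ne_eq, ENNReal.coe_ne_top, not_false_eq_true, true_and, ENNReal.coe_toReal]
    rw [← coe_ennreal_toReal ENNReal.coe_ne_top]
    norm_cast

end EReal

section ENNRealConvex

variable {E : Type*} [AddCommGroup E] [Module ℝ E]

-- `ConvexOn ℝ` does not apply to `ℝ≥0∞`-valued functions, `ℝ≥0∞` not being an `ℝ`-module.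
def ENNRealConvexOn (s : Set E) (f : E → ℝ≥0∞) : Prop :=
  ∀ x ∈ s, ∀ y ∈ s, ∀ a b : ℝ, 0 ≤ a → 0 ≤ b → a + b = 1 →
    f (a • x + b • y) ≤ ENNReal.ofReal a * f x + ENNReal.ofReal b * f y

namespace ENNRealConvexOn

variable {s : Set E} {f : E → ℝ≥0∞}

theorem convexOn_toReal (hs : Convex ℝ s) (hf : ENNRealConvexOn s f) :
    ConvexOn ℝ {x ∈ s | f x ≠ ⊤} fun x => (f x).toReal := by
  have key : ∀ x ∈ {x ∈ s | f x ≠ ⊤}, ∀ y ∈ {x ∈ s | f x ≠ ⊤}, ∀ a b : ℝ, 0 ≤ a → 0 ≤ b →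
      a + b = 1 → (a • x + b • y ∈ s ∧ f (a • x + b • y) ≠ ⊤) ∧
        (f (a • x + b • y)).toReal ≤ a * (f x).toReal + b * (f y).toReal := by
    rintro x ⟨hxs, hx⟩ y ⟨hys, hy⟩ a b ha hb hab
    have hle := hf x hxs y hys a b ha hb hab
    have hfin : ENNReal.ofReal a * f x + ENNReal.ofReal b * f y ≠ ⊤ := by finiteness
    refine ⟨⟨hs hxs hys ha hb hab, ne_top_of_le_ne_top hfin hle⟩, ?_⟩
    have hle_toReal := ENNReal.toReal_mono hfin hle
    rwa [ENNReal.toReal_add (by finiteness) (by finiteness), ENNReal.toReal_mul,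
      ENNReal.toReal_mul, ENNReal.toReal_ofReal ha, ENNReal.toReal_ofReal hb] at hle_toReal
  exact ⟨fun x hx y hy a b ha hb hab => (key x hx y hy a b ha hb hab).1,
    fun x hx y hy a b ha hb hab => (key x hx y hy a b ha hb hab).2⟩

theorem quasiconvexOn_coe_add {u : E → ℝ} (hs : Convex ℝ s) (hu : ConvexOn ℝ s u)
    (hf : ENNRealConvexOn s f) : QuasiconvexOn ℝ s fun x => (u x : EReal) + f x := by
  intro r
  induction r with
  | bot =>
    convert convex_empty (𝕜 := ℝ) (E := E)
    ext x
    simp [EReal.add_eq_bot_iff]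
  | coe r =>
    -- a real sublevel set only sees the points where `f` is finite
    convert ((hu.subset (sep_subset _ _) (hf.convexOn_toReal hs).1).add
      (hf.convexOn_toReal hs)).convex_le r using 1
    ext x
    simp [EReal.coe_add_coe_ennreal_le_coe_iff, and_assoc]
  | top => simpa using hs

end ENNRealConvexOn

end ENNRealConvex

theorem minimax_coe_add_ennreal {E F : Type*}
    [TopologicalSpace E] [AddCommGroup E] [Module ℝ E] [IsTopologicalAddGroup E]
    [ContinuousSMul ℝ E]
    [TopologicalSpace F] [AddCommGroup F] [Module ℝ F] [IsTopologicalAddGroup F]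
    [ContinuousSMul ℝ F]
    {X : Set E} {Y : Set F} (hX : X.Nonempty) (hXconv : Convex ℝ X) (hXcpt : IsCompact X)
    (hYconv : Convex ℝ Y) {u : E → F → ℝ}
    (hu_contX : ∀ y ∈ Y, ContinuousOn (fun x => u x y) X)
    (hu_convX : ∀ y ∈ Y, ConvexOn ℝ X fun x => u x y)
    (hu_contY : ∀ x ∈ X, ContinuousOn (u x) Y) (hu_concY : ∀ x ∈ X, ConcaveOn ℝ Y (u x))
    {f : E → ℝ≥0∞} (hf_lsc : LowerSemicontinuousOn f X) (hf_conv : ENNRealConvexOn X f) :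
    ⨅ x ∈ X, ⨆ y ∈ Y, ((u x y : EReal) + f x) = ⨆ y ∈ Y, ⨅ x ∈ X, ((u x y : EReal) + f x) := by
  refine Sion.minimax' hX hXconv hXcpt (fun y hy => ?_)
    (fun y hy => hf_conv.quasiconvexOn_coe_add hXconv (hu_convX y hy)) hYconv
    (fun x hx => ((EReal.continuous_coe_add_const _).comp_continuousOn
      (hu_contY x hx)).upperSemicontinuousOn)
    (fun x hx => (hu_concY x hx).quasiconcaveOn.monotone_comp (EReal.monotone_coe_add_const _))
  exact LowerSemicontinuousOn.add'
    (continuous_coe_real_ereal.comp_continuousOn (hu_contX y hy)).lowerSemicontinuousOn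
    (continuous_coe_ennreal_ereal.comp_lowerSemicontinuousOn hf_lsc
      EReal.coe_ennreal_strictMono.monotone)
    fun x _ => EReal.continuousAt_add (Or.inl (EReal.coe_ne_top _)) (Or.inl (EReal.coe_ne_bot _))

/-- The minimax (Sion) step in the double-optimization form of the Lagrangian: for
`H(p) = sup_{π ∈ K} (G(p,π) − I(π))` with `K` compact convex, `G` continuous, convex
in `p` and concave in `π`, and `I` convex, lower semicontinuous, `≥ 0` and not
identically `+∞`, the Legendre transform of `H` satisfies
`L(v) = inf_{π ∈ K} [sup_p (⟨p,v⟩ − G(p,π)) + I(π)]`. -/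
theorem legendre_minimax {d : ℕ} {V : Type*}
    [AddCommGroup V] [Module ℝ V] [TopologicalSpace V]
    [IsTopologicalAddGroup V] [ContinuousSMul ℝ V]
    (K : Set V) (hKcompact : IsCompact K) (hKconv : Convex ℝ K)
    (G : EuclideanSpace ℝ (Fin d) → V → ℝ)
    (hGcont : ContinuousOn (fun q : EuclideanSpace ℝ (Fin d) × V => G q.1 q.2)
      (Set.univ ×ˢ K))
    (hGconv : ∀ π ∈ K, ConvexOn ℝ Set.univ (fun p => G p π))
    (hGconc : ∀ p : EuclideanSpace ℝ (Fin d), ConcaveOn ℝ K (fun π => G p π))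
    (I : V → ℝ≥0∞)
    (hIlsc : LowerSemicontinuousOn I K)
    (hIconv : ∀ π₁ ∈ K, ∀ π₂ ∈ K, ∀ a b : ℝ, 0 ≤ a → 0 ≤ b → a + b = 1 →
      I (a • π₁ + b • π₂) ≤ ENNReal.ofReal a * I π₁ + ENNReal.ofReal b * I π₂)
    (hIproper : ∃ π ∈ K, I π ≠ ⊤)
    (H : EuclideanSpace ℝ (Fin d) → EReal)
    (hH : ∀ p, H p = ⨆ π : K, ((G p π : ℝ) : EReal) - (I π : EReal))
    (v : EuclideanSpace ℝ (Fin d)) :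
    (⨆ p : EuclideanSpace ℝ (Fin d), ((⟪p, v⟫ : ℝ) : EReal) - H p)
      = ⨅ π : K,
          ((⨆ p : EuclideanSpace ℝ (Fin d), ((⟪p, v⟫ : ℝ) : EReal) - ((G p π : ℝ) : EReal))
            + (I π : EReal)) := by
  obtain ⟨π₀, hπ₀, -⟩ := hIproper
  have hG_contP : ∀ π ∈ K, Continuous fun p => G p π := fun π hπ =>
    continuousOn_univ.1 <| hGcont.comp (continuous_id.prodMk continuous_const).continuousOn
      fun _ _ => ⟨trivial, hπ⟩
  have hG_contK : ∀ p, ContinuousOn (G p) K := fun p =>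
    hGcont.comp (continuous_const.prodMk continuous_id).continuousOn fun _ hπ => ⟨trivial, hπ⟩
  have hinner_conc : ConcaveOn ℝ univ fun p : EuclideanSpace ℝ (Fin d) => ⟪p, v⟫ :=
    ((innerₛₗ ℝ).flip v).concaveOn convex_univ
  have hminimax := minimax_coe_add_ennreal (u := fun π p => ⟪p, v⟫ - G p π) ⟨π₀, hπ₀⟩
    hKconv hKcompact convex_univ (fun p _ => continuousOn_const.sub (hG_contK p))
    (fun p _ => (convexOn_const _ hKconv).sub (hGconc p))
    (fun π hπ => ((continuous_id.inner continuous_const).sub (hG_contP π hπ)).continuousOn)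
    (fun π hπ => hinner_conc.sub (hGconv π hπ)) hIlsc hIconv
  simp only [mem_univ, iSup_pos] at hminimax
  calc _ = ⨆ p, ⨅ π ∈ K, ((⟪p, v⟫ - G p π : ℝ) : EReal) + I π := by
        refine iSup_congr fun p => ?_
        simp only [hH, EReal.coe_sub_iSup, EReal.coe_sub_coe_sub, iInf_subtype']
    _ = ⨅ π ∈ K, ⨆ p, ((⟪p, v⟫ - G p π : ℝ) : EReal) + I π := hminimax.symm
    _ = _ := by simp only [iInf_subtype', EReal.iSup_add_coe_ennreal, EReal.coe_sub]
end
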